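/- Let A be an abelian category, M, M' objects, and suppose γ ∈ Ext²(M, M') is the Yoneda product γ₁ · γ₂ with γ₁ ∈ Ext¹(E, M') and γ₂ ∈ Ext¹(M, E). If there exists a subobject E' ⊆ E with quotient E'' such that Ext¹(M, E'') = 0 and Ext¹(E', M') = 0, then γ = 0. -/

import Mathlib

open CategoryTheory CategoryTheory.Abelian

universe w v u

namespace CategoryTheory.Abelian.Ext

variable {C : Type u} [Category.{v} C] [Abelian C] [HasExt.{w} C]

/-- By exactness of `Ext M S.X₁ n → Ext M S.X₂ n → Ext M S.X₃ n`, `β` lifts along `S.f`, so the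
product factors through `(mk₀ S.f).comp α`. -/
lemma comp_eq_zero_of_shortExact {S : ShortComplex C} (hS : S.ShortExact) {M M' : C}
    {n m k : ℕ} (β : Ext M S.X₂ n) (α : Ext S.X₂ M' m) (h : n + m = k)
    (hβ : β.comp (mk₀ S.g) (add_zero n) = 0) (hα : (mk₀ S.f).comp α (zero_add m) = 0) :
    β.comp α h = 0 := by
  obtain ⟨δ, rfl⟩ := covariant_sequence_exact₂ M hS β hβ
  rw [comp_assoc_of_second_deg_zero, hα, comp_zero]

end CategoryTheory.Abelian.Ext

/-- Let `A` be an abelian category, `M, M'` objects, and suppose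
`γ ∈ Ext²(M, M')` is the Yoneda product `γ₁ · γ₂` with `γ₁ ∈ Ext¹(E, M')` and
`γ₂ ∈ Ext¹(M, E)`.  If there is a subobject `E' ⊆ E` with quotient `E''`
(i.e. a short exact sequence `0 → E' → E → E'' → 0`) such that
`Ext¹(M, E'') = 0` and `Ext¹(E', M') = 0`, then `γ = 0`. -/
theorem stmt15 {C : Type u} [Category.{v} C] [Abelian C] [HasExt.{w} C]
    (M M' E : C) (γ : Ext M M' 2) (γ₁ : Ext E M' 1) (γ₂ : Ext M E 1)
    (hγ : γ = γ₂.comp γ₁ rfl)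
    -- a short exact sequence `0 → E' → E → E'' → 0`
    (E' E'' : C) (f : E' ⟶ E) (g : E ⟶ E'') (w : f ≫ g = 0)
    (hS : (ShortComplex.mk f g w).ShortExact)
    (h₂ : ∀ x : Ext M E'' 1, x = 0)
    (h₁ : ∀ x : Ext E' M' 1, x = 0) :
    γ = 0 :=
  hγ ▸ Ext.comp_eq_zero_of_shortExact hS γ₂ γ₁ rfl (h₂ _) (h₁ _)
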